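/- Suppose the eleven known blocks a, b, c, d, e, f, g, h, i, j, k are invertible and that A·B = I and B·A = I. Then w = i⁻¹ − d·g·i⁻¹ − e·z·i⁻¹. -/

import Mathlib

open Matrix

/-- The 3×3 block matrix `[[m11, m12, m13], [m21, m22, m23], [m31, m32, m33]]`
assembled from n×n blocks. -/
def blk3 {F : Type*} [Field F] {n : ℕ}
    (m11 m12 m13 m21 m22 m23 m31 m32 m33 : Matrix (Fin n) (Fin n) F) :
    Matrix (Fin n ⊕ (Fin n ⊕ Fin n)) (Fin n ⊕ (Fin n ⊕ Fin n)) F :=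
  Matrix.fromBlocks m11 (Matrix.fromCols m12 m13) (Matrix.fromRows m21 m31)
    (Matrix.fromBlocks m22 m23 m32 m33)

theorem Matrix.fromCols_add_fromCols {R m n₁ n₂ : Type*} [Add R] (A₁ B₁ : Matrix m n₁ R)
    (A₂ B₂ : Matrix m n₂ R) : fromCols A₁ A₂ + fromCols B₁ B₂ = fromCols (A₁ + B₁) (A₂ + B₂) := by
  ext _ (_ | _) <;> rfl

theorem Matrix.fromRows_add_fromRows {R m₁ m₂ n : Type*} [Add R] (A₁ B₁ : Matrix m₁ n R)
    (A₂ B₂ : Matrix m₂ n R) : fromRows A₁ A₂ + fromRows B₁ B₂ = fromRows (A₁ + B₁) (A₂ + B₂) := by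
  ext (_ | _) _ <;> rfl

section Blk3

variable {F : Type*} [Field F] {n : ℕ}

theorem blk3_mul_blk3
    (a₁₁ a₁₂ a₁₃ a₂₁ a₂₂ a₂₃ a₃₁ a₃₂ a₃₃ b₁₁ b₁₂ b₁₃ b₂₁ b₂₂ b₂₃ b₃₁ b₃₂ b₃₃ :
      Matrix (Fin n) (Fin n) F) :
    blk3 a₁₁ a₁₂ a₁₃ a₂₁ a₂₂ a₂₃ a₃₁ a₃₂ a₃₃ * blk3 b₁₁ b₁₂ b₁₃ b₂₁ b₂₂ b₂₃ b₃₁ b₃₂ b₃₃ =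
      blk3 (a₁₁ * b₁₁ + a₁₂ * b₂₁ + a₁₃ * b₃₁) (a₁₁ * b₁₂ + a₁₂ * b₂₂ + a₁₃ * b₃₂)
        (a₁₁ * b₁₃ + a₁₂ * b₂₃ + a₁₃ * b₃₃)
        (a₂₁ * b₁₁ + a₂₂ * b₂₁ + a₂₃ * b₃₁) (a₂₁ * b₁₂ + a₂₂ * b₂₂ + a₂₃ * b₃₂)
        (a₂₁ * b₁₃ + a₂₂ * b₂₃ + a₂₃ * b₃₃)
        (a₃₁ * b₁₁ + a₃₂ * b₂₁ + a₃₃ * b₃₁) (a₃₁ * b₁₂ + a₃₂ * b₂₂ + a₃₃ * b₃₂)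
        (a₃₁ * b₁₃ + a₃₂ * b₂₃ + a₃₃ * b₃₃) := by
  simp only [blk3, fromBlocks_multiply, fromRows_mul_fromCols, fromCols_mul_fromRows,
    fromBlocks_mul_fromRows, fromCols_mul_fromBlocks, fromBlocks_add]
  simp only [mul_fromCols, fromRows_mul, fromCols_add_fromCols, fromRows_add_fromRows, add_assoc]

theorem blk3_one : blk3 (1 : Matrix (Fin n) (Fin n) F) 0 0 0 1 0 0 0 1 = 1 := by
  simp only [blk3, fromCols_zero, fromRows_zero, fromBlocks_one]

theorem blk3_inj
    {a₁₁ a₁₂ a₁₃ a₂₁ a₂₂ a₂₃ a₃₁ a₃₂ a₃₃ b₁₁ b₁₂ b₁₃ b₂₁ b₂₂ b₂₃ b₃₁ b₃₂ b₃₃ :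
      Matrix (Fin n) (Fin n) F} :
    blk3 a₁₁ a₁₂ a₁₃ a₂₁ a₂₂ a₂₃ a₃₁ a₃₂ a₃₃ = blk3 b₁₁ b₁₂ b₁₃ b₂₁ b₂₂ b₂₃ b₃₁ b₃₂ b₃₃ ↔
      a₁₁ = b₁₁ ∧ a₁₂ = b₁₂ ∧ a₁₃ = b₁₃ ∧ a₂₁ = b₂₁ ∧ a₂₂ = b₂₂ ∧ a₂₃ = b₂₃ ∧
        a₃₁ = b₃₁ ∧ a₃₂ = b₃₂ ∧ a₃₃ = b₃₃ := by
  simp only [blk3, fromBlocks_inj, fromCols_inj.eq_iff, fromRows_inj.eq_iff]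
  tauto

end Blk3

theorem stmt_9_general {F : Type*} [Field F] {n : ℕ}
    (a b c d e f g h i j k : Matrix (Fin n) (Fin n) F)
    (hi : IsUnit i)
    (t u v w x y z : Matrix (Fin n) (Fin n) F)
    (hAB : blk3 a t b u c v d w e * blk3 x f g h y i j k z = 1) :
    w = i⁻¹ - d * g * i⁻¹ - e * z * i⁻¹ := by
  have hcorner : d * g + w * i + e * z = 1 := by
    rw [blk3_mul_blk3, ← blk3_one, blk3_inj] at hAB
    exact hAB.2.2.2.2.2.2.2.2
  have hwi : w * i = 1 - d * g - e * z := by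
    rw [← hcorner]
    abel
  calc w = w * i * i⁻¹ :=
        (mul_nonsing_inv_cancel_right i w ((isUnit_iff_isUnit_det i).mp hi)).symm
    _ = i⁻¹ - d * g * i⁻¹ - e * z * i⁻¹ := by rw [hwi, sub_mul, sub_mul, one_mul]

theorem stmt_9 {F : Type*} [Field F] {n : ℕ} (hn : 0 < n)
    (a b c d e f g h i j k : Matrix (Fin n) (Fin n) F)
    (ha : IsUnit a) (hb : IsUnit b) (hc : IsUnit c) (hd : IsUnit d) (he : IsUnit e)
    (hf : IsUnit f) (hg : IsUnit g) (hh : IsUnit h) (hi : IsUnit i) (hj : IsUnit j)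
    (hk : IsUnit k)
    (t u v w x y z : Matrix (Fin n) (Fin n) F)
    (hAB : blk3 a t b u c v d w e * blk3 x f g h y i j k z = 1)
    (hBA : blk3 x f g h y i j k z * blk3 a t b u c v d w e = 1) :
    w = i⁻¹ - d * g * i⁻¹ - e * z * i⁻¹ :=
  stmt_9_general a b c d e f g h i j k hi t u v w x y z hAB
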